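/- arXiv:1702.05913 — 4 statements merged into one kernel-verified Lean document; each statement's English description precedes it below -/
import Mathlib

section
/- With P and S̃ as in the cascade recurrence, for each fixed k ≥ 1 the sequence n ↦ S̃(n,k) is monotone increasing in n and bounded above, hence convergent. -/
/-!
Partial sums `S̃(n,k) = ∑_{i ≤ n} P(i,k)` satisfy
`S̃(n+1,k) = P(1,k) + β^k S̃(n,k) + (1 - β^(k-1)) S̃(n,k-1)`.
Since `P ≥ 0`, `S̃(·,k)` is monotone, so `S̃(n,k) ≤ S̃(n+1,k)` turns this identity into
`(1 - β^k) S̃(n,k) ≤ P(1,k) + (1 - β^(k-1)) B_{k-1}`, where `B_{k-1}` bounds `S̃(·,k-1)`;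
induction on `k` gives the bounds, and a bounded monotone sequence converges.
-/

open Filter Finset

lemma Monotone.le_div_of_le_add_mul {s : ℕ → ℝ} (hs : Monotone s) {b c : ℝ} (hb : b < 1)
    (h : ∀ n, s (n + 1) ≤ c + b * s n) (n : ℕ) : s n ≤ c / (1 - b) := by
  rw [le_div_iff₀ (sub_pos.2 hb)]
  linarith [hs n.le_succ, h n]

lemma monotone_sum_Icc_one {f : ℕ → ℝ} (hf : ∀ i, 0 ≤ f i) :
    Monotone fun n => ∑ i ∈ Icc 1 n, f i :=
  fun _ _ hmn => sum_le_sum_of_subset_of_nonneg (Icc_subset_Icc_right hmn) fun i _ _ => hf i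

namespace Cascade

variable {β : ℝ} {P : ℕ → ℕ → ℝ}

/-- The recurrence also holds for `k > n`, where both sides vanish. -/
lemma recurrence_succ (hP0 : ∀ n k : ℕ, (n < k ∨ k = 0) → P n k = 0)
    (hPrec : ∀ n k : ℕ, 2 ≤ n → 1 ≤ k → k ≤ n →
      P n k = β ^ k * P (n - 1) k + (1 - β ^ (k - 1)) * P (n - 1) (k - 1))
    {n k : ℕ} (hn : 1 ≤ n) (hk : 1 ≤ k) :
    P (n + 1) k = β ^ k * P n k + (1 - β ^ (k - 1)) * P n (k - 1) := by
  rcases le_or_gt k (n + 1) with hkn | hnk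
  · exact hPrec (n + 1) k (by omega) hk hkn
  · rw [hP0 (n + 1) k (.inl hnk), hP0 n k (.inl (by omega)), hP0 n (k - 1) (.inl (by omega))]
    ring

lemma nonneg (hβ0 : 0 ≤ β) (hβ1 : β ≤ 1) (hP1 : 0 ≤ P 1 1)
    (hP0 : ∀ n k : ℕ, (n < k ∨ k = 0) → P n k = 0)
    (hPrec : ∀ n k : ℕ, 2 ≤ n → 1 ≤ k → k ≤ n →
      P n k = β ^ k * P (n - 1) k + (1 - β ^ (k - 1)) * P (n - 1) (k - 1))
    (n k : ℕ) : 0 ≤ P n k := by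
  induction n generalizing k with
  | zero => exact (hP0 0 k (by omega)).ge
  | succ n ih =>
    obtain rfl | hk := k.eq_zero_or_pos
    · exact (hP0 _ 0 (.inr rfl)).ge
    obtain rfl | hn := n.eq_zero_or_pos
    · obtain rfl | hk1 := (show 1 ≤ k from hk).eq_or_lt
      · exact hP1
      · exact (hP0 1 k (.inl hk1)).ge
    rw [recurrence_succ hP0 hPrec hn hk]
    have hβk : 0 ≤ 1 - β ^ (k - 1) := sub_nonneg.2 (pow_le_one₀ hβ0 hβ1)
    exact add_nonneg (mul_nonneg (by positivity) (ih k)) (mul_nonneg hβk (ih (k - 1)))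

lemma sum_Icc_one_succ (hP0 : ∀ n k : ℕ, (n < k ∨ k = 0) → P n k = 0)
    (hPrec : ∀ n k : ℕ, 2 ≤ n → 1 ≤ k → k ≤ n →
      P n k = β ^ k * P (n - 1) k + (1 - β ^ (k - 1)) * P (n - 1) (k - 1))
    {k : ℕ} (hk : 1 ≤ k) (n : ℕ) :
    ∑ i ∈ Icc 1 (n + 1), P i k
      = P 1 k + β ^ k * ∑ i ∈ Icc 1 n, P i k + (1 - β ^ (k - 1)) * ∑ i ∈ Icc 1 n, P i (k - 1) := by
  induction n with
  | zero => simp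
  | succ m ih =>
    rw [sum_Icc_succ_top (by omega : 1 ≤ m + 1), sum_Icc_succ_top (by omega : 1 ≤ m + 1),
      sum_Icc_succ_top (by omega : 1 ≤ m + 1 + 1), ih, recurrence_succ hP0 hPrec (n := m + 1) (by omega) hk]
    ring

lemma exists_sum_le (hβ0 : 0 ≤ β) (hβ1 : β < 1) (hP1 : 0 ≤ P 1 1)
    (hP0 : ∀ n k : ℕ, (n < k ∨ k = 0) → P n k = 0)
    (hPrec : ∀ n k : ℕ, 2 ≤ n → 1 ≤ k → k ≤ n →
      P n k = β ^ k * P (n - 1) k + (1 - β ^ (k - 1)) * P (n - 1) (k - 1))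
    (k : ℕ) : ∃ B, ∀ n, ∑ i ∈ Icc 1 n, P i k ≤ B := by
  induction k with
  | zero => exact ⟨0, fun n => (sum_eq_zero fun i _ => hP0 i 0 (.inr rfl)).le⟩
  | succ k ih =>
    obtain ⟨B, hB⟩ := ih
    have hPnn := nonneg hβ0 hβ1.le hP1 hP0 hPrec
    have hβk : 0 ≤ 1 - β ^ k := sub_nonneg.2 (pow_le_one₀ hβ0 hβ1.le)
    refine ⟨_, (monotone_sum_Icc_one fun i => hPnn i (k + 1)).le_div_of_le_add_mul
      (c := P 1 (k + 1) + (1 - β ^ k) * B) (pow_lt_one₀ hβ0 hβ1 k.add_one_ne_zero) fun n => ?_⟩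
    rw [sum_Icc_one_succ hP0 hPrec (Nat.le_add_left 1 k) n, Nat.add_sub_cancel]
    linarith [mul_le_mul_of_nonneg_left (hB n) hβk]

end Cascade

/-- For each fixed `k ≥ 1`, `n ↦ S̃(n,k)` is monotone increasing and bounded above,
hence convergent. -/
theorem cascade_Stilde_monotone_bounded_convergent
    (β : ℝ) (hβ0 : 0 < β) (hβ1 : β < 1)
    (P : ℕ → ℕ → ℝ)
    (hP1 : P 1 1 = 1)
    (hP0 : ∀ n k : ℕ, (n < k ∨ k = 0) → P n k = 0)
    (hPrec : ∀ n k : ℕ, 2 ≤ n → 1 ≤ k → k ≤ n →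
      P n k = β ^ k * P (n - 1) k + (1 - β ^ (k - 1)) * P (n - 1) (k - 1)) :
    ∀ k : ℕ, 1 ≤ k →
      Monotone (fun n : ℕ => ∑ i ∈ Finset.Icc 1 n, P i k)
      ∧ BddAbove (Set.range (fun n : ℕ => ∑ i ∈ Finset.Icc 1 n, P i k))
      ∧ ∃ L : ℝ, Tendsto (fun n : ℕ => ∑ i ∈ Finset.Icc 1 n, P i k) atTop (nhds L) := by
  intro k _
  have hP1' : 0 ≤ P 1 1 := hP1 ▸ zero_le_one
  have hmono := monotone_sum_Icc_one fun i => Cascade.nonneg hβ0.le hβ1.le hP1' hP0 hPrec i k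
  obtain ⟨B, hB⟩ := Cascade.exists_sum_le hβ0.le hβ1 hP1' hP0 hPrec k
  have hbdd : BddAbove (Set.range fun n => ∑ i ∈ Icc 1 n, P i k) := ⟨B, Set.forall_mem_range.2 hB⟩
  exact ⟨hmono, hbdd, _, tendsto_atTop_ciSup hmono hbdd⟩
end

section
/- With P and S̃ as in the cascade recurrence, for every k ≥ 1 we have lim_{n→∞} S̃(n,k) = 1/(1-β^k). -/
/-!
Summing the recurrence over `n` shows that `x n = S̃(n,k)` satisfies
`x (n+1) = β^k x n + b n` with `b n = [k = 1] + (1 - β^(k-1)) S̃(n,k-1)`. By induction on `k`,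
`b n → 1`: for `k = 1` it is constant, for `k ≥ 2` the induction hypothesis gives
`(1 - β^(k-1)) S̃(n,k-1) → 1`. A linear recurrence with contraction factor `β^k < 1` and
convergent forcing term converges to its fixed point, here `1 / (1 - β^k)`.
-/

open Filter Finset Topology

theorem tendsto_zero_of_succ_le_mul_add {u e : ℕ → ℝ} {r : ℝ} (hr0 : 0 ≤ r) (hr1 : r < 1)
    (hu0 : ∀ n, 0 ≤ u n) (hu : ∀ n, u (n + 1) ≤ r * u n + e n)
    (he : Tendsto e atTop (𝓝 0)) : Tendsto u atTop (𝓝 0) := by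
  refine tendsto_order.2 ⟨fun c hc => .of_forall fun n => hc.trans_le (hu0 n), fun ε hε => ?_⟩
  obtain ⟨N, hN⟩ := eventually_atTop.1
    (he.eventually (gt_mem_nhds (mul_pos (sub_pos.2 hr1) (half_pos hε))))
  -- `ε / 2` is the fixed point of `t ↦ r * t + (1 - r) * (ε / 2)`
  have hdecay : ∀ m, u (N + m) - ε / 2 ≤ r ^ m * (u N - ε / 2) := by
    intro m
    induction m with
    | zero => simp
    | succ m ih =>
      rw [← add_assoc]
      calc u (N + m + 1) - ε / 2
          ≤ r * (u (N + m) - ε / 2) := by linarith [hu (N + m), hN (N + m) (by omega)]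
        _ ≤ r * (r ^ m * (u N - ε / 2)) := mul_le_mul_of_nonneg_left ih hr0
        _ = r ^ (m + 1) * (u N - ε / 2) := by ring
  have hpow : Tendsto (fun m => r ^ m * (u N - ε / 2)) atTop (𝓝 0) := by
    simpa using (tendsto_pow_atTop_nhds_zero_of_lt_one hr0 hr1).mul_const (u N - ε / 2)
  obtain ⟨M, hM⟩ := eventually_atTop.1 (hpow.eventually (gt_mem_nhds (half_pos hε)))
  refine eventually_atTop.2 ⟨N + M, fun n hn => ?_⟩
  obtain ⟨m, rfl⟩ := Nat.exists_eq_add_of_le (le_of_add_le_left hn)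
  linarith [hdecay m, hM m (by omega)]

theorem tendsto_of_succ_eq_mul_add {𝕜 : Type*} [NormedField 𝕜] {x b : ℕ → 𝕜} {a L : 𝕜}
    (ha : ‖a‖ < 1) (hx : ∀ n, x (n + 1) = a * x n + b n) (hb : Tendsto b atTop (𝓝 L)) :
    Tendsto x atTop (𝓝 (L / (1 - a))) := by
  have ha1 : 1 - a ≠ 0 := fun h => by simp [← sub_eq_zero.1 h] at ha
  have hfix : L / (1 - a) = a * (L / (1 - a)) + L := by field_simp; ring
  rw [tendsto_iff_norm_sub_tendsto_zero] at hb ⊢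
  refine tendsto_zero_of_succ_le_mul_add (norm_nonneg a) ha (fun n => norm_nonneg _)
    (fun n => ?_) hb
  calc ‖x (n + 1) - L / (1 - a)‖ = ‖a * (x n - L / (1 - a)) + (b n - L)‖ := by
        congr 1; linear_combination hx n - hfix
    _ ≤ ‖a * (x n - L / (1 - a))‖ + ‖b n - L‖ := norm_add_le _ _
    _ = ‖a‖ * ‖x n - L / (1 - a)‖ + ‖b n - L‖ := by rw [norm_mul]

theorem sum_Icc_one_succ {M : Type*} [AddCommMonoid M] (f : ℕ → M) (n : ℕ) :
    ∑ i ∈ Icc 1 (n + 1), f i = f 1 + ∑ i ∈ Icc 1 n, f (i + 1) := by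
  rw [← add_sum_Ioc_eq_sum_Icc (by omega), ← Icc_add_one_left_eq_Ioc, ← map_add_right_Icc,
    sum_map]
  rfl

section Cascade

variable {β : ℝ} {P : ℕ → ℕ → ℝ}

theorem cascade_recurrence_succ_succ (hP0 : ∀ n k : ℕ, (n < k ∨ k = 0) → P n k = 0)
    (hPrec : ∀ n k : ℕ, 2 ≤ n → 1 ≤ k → k ≤ n →
      P n k = β ^ k * P (n - 1) k + (1 - β ^ (k - 1)) * P (n - 1) (k - 1))
    (n k : ℕ) :
    P (n + 2) (k + 1) = β ^ (k + 1) * P (n + 1) (k + 1) + (1 - β ^ k) * P (n + 1) k := by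
  rcases le_or_gt (k + 1) (n + 2) with hk | hk
  · simpa using hPrec (n + 2) (k + 1) (by omega) (by omega) hk
  · rw [hP0 _ _ (.inl hk), hP0 _ _ (.inl (by omega)), hP0 _ _ (.inl (by omega))]
    ring

theorem cascade_sum_Icc_succ (hP0 : ∀ n k : ℕ, (n < k ∨ k = 0) → P n k = 0)
    (hPrec : ∀ n k : ℕ, 2 ≤ n → 1 ≤ k → k ≤ n →
      P n k = β ^ k * P (n - 1) k + (1 - β ^ (k - 1)) * P (n - 1) (k - 1))
    (n k : ℕ) :
    ∑ i ∈ Icc 1 (n + 1), P i (k + 1) =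
      β ^ (k + 1) * ∑ i ∈ Icc 1 n, P i (k + 1) +
        (P 1 (k + 1) + (1 - β ^ k) * ∑ i ∈ Icc 1 n, P i k) := by
  rw [sum_Icc_one_succ, mul_sum, mul_sum, ← add_assoc, add_comm _ (P 1 (k + 1)), add_assoc,
    ← sum_add_distrib]
  refine congrArg _ (sum_congr rfl fun i hi => ?_)
  obtain ⟨j, rfl⟩ := Nat.exists_eq_add_of_le' (mem_Icc.1 hi).1
  exact cascade_recurrence_succ_succ hP0 hPrec j k

end Cascade

/-- Theorem 1 of the paper: for every `k ≥ 1`,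
`lim_{n→∞} S̃(n,k) = 1/(1-β^k)`, i.e. `S(n,k) ~ 1/(n(1-β^k))`. -/
theorem cascade_Stilde_tendsto
    (β : ℝ) (hβ0 : 0 < β) (hβ1 : β < 1)
    (P : ℕ → ℕ → ℝ)
    (hP1 : P 1 1 = 1)
    (hP0 : ∀ n k : ℕ, (n < k ∨ k = 0) → P n k = 0)
    (hPrec : ∀ n k : ℕ, 2 ≤ n → 1 ≤ k → k ≤ n →
      P n k = β ^ k * P (n - 1) k + (1 - β ^ (k - 1)) * P (n - 1) (k - 1)) :
    ∀ k : ℕ, 1 ≤ k →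
      Tendsto (fun n : ℕ => ∑ i ∈ Finset.Icc 1 n, P i k) atTop
        (nhds (1 / (1 - β ^ k))) := by
  have hlt : ∀ k, 1 ≤ k → β ^ k < 1 := fun k hk => pow_lt_one₀ hβ0.le hβ1 (by omega)
  have hnorm : ∀ k, 1 ≤ k → ‖β ^ k‖ < 1 := fun k hk => by
    rw [Real.norm_of_nonneg (by positivity)]
    exact hlt k hk
  intro k hk
  induction k, hk using Nat.le_induction with
  | base =>
    refine tendsto_of_succ_eq_mul_add (by simpa using hnorm 1 le_rfl) (fun n => ?_)
      tendsto_const_nhds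
    simpa [hP1] using cascade_sum_Icc_succ hP0 hPrec n 0
  | succ k hk ih =>
    have hk1 : 1 - β ^ k ≠ 0 := sub_ne_zero.2 (hlt k hk).ne'
    have hb : Tendsto (fun n => P 1 (k + 1) + (1 - β ^ k) * ∑ i ∈ Icc 1 n, P i k)
        atTop (𝓝 1) := by
      simpa [hP0 1 (k + 1) (.inl (by omega)), hk1] using ih.const_mul (1 - β ^ k)
    exact tendsto_of_succ_eq_mul_add (hnorm (k + 1) (by omega))
      (cascade_sum_Icc_succ hP0 hPrec · k) hb
end

section
/- In the dependent-passing cascade model, for every k ≥ 1, lim_{n→∞} ∑_{i=1}^n Q(i,k) = 1/(1-β^k). In particular the limiting cascade size distribution is the same as in the independent-passing (CGM) model. -/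
/-!
Writing `S k N = ∑_{i=1}^N Q(i,k)`, the recursion for `Q` sums to
`S k (N+1) = (1 - (1-β^k)α) S k N + α(1-β^(k-1)) S (k-1) N + Q(1,k)`.
The coefficient of `S k N` lies in `[0,1)` and all `Q(n,k)` are nonnegative, so by induction on `k`
each `S k` is monotone and bounded, and its limit `A_k` satisfies `A_k = (1 - (1-β^k)α) A_k + α`,
because the forcing term tends to `α(1-β^(k-1)) A_(k-1) = α` (to `Q(1,1) = α` when `k = 1`).
Hence `A_k = 1/(1-β^k)`.
-/

open Filter Finset Topology

section AffineRecurrence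

variable {x g : ℕ → ℝ} {c a : ℝ}

theorem le_div_one_sub_of_recurrence (hc0 : 0 ≤ c) (hc1 : c < 1) (hx0 : x 0 ≤ a / (1 - c))
    (hrec : ∀ n, x (n + 1) = c * x n + g n) (hg : ∀ n, g n ≤ a) (n : ℕ) :
    x n ≤ a / (1 - c) := by
  induction n with
  | zero => exact hx0
  | succ n ih =>
    have hfix : c * (a / (1 - c)) + a = a / (1 - c) := by
      field_simp [(sub_pos.2 hc1).ne']
      ring
    rw [hrec n, ← hfix]
    gcongr
    exact hg n

theorem tendsto_div_one_sub_of_monotone_recurrence (hc0 : 0 ≤ c) (hc1 : c < 1)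
    (hx : Monotone x) (hx0 : x 0 ≤ a / (1 - c)) (hrec : ∀ n, x (n + 1) = c * x n + g n)
    (hgm : Monotone g) (hg : Tendsto g atTop (𝓝 a)) :
    Tendsto x atTop (𝓝 (a / (1 - c))) := by
  have hbdd : BddAbove (Set.range x) := by
    refine ⟨a / (1 - c), ?_⟩
    rintro _ ⟨n, rfl⟩
    exact le_div_one_sub_of_recurrence hc0 hc1 hx0 hrec (hgm.ge_of_tendsto hg) n
  obtain ⟨L, hL⟩ : ∃ L, Tendsto x atTop (𝓝 L) := ⟨_, tendsto_atTop_ciSup hx hbdd⟩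
  have hshift : Tendsto (fun n => c * x n + g n) atTop (𝓝 L) := by
    simpa only [hrec] using (tendsto_add_atTop_iff_nat 1).2 hL
  have hfix : L = c * L + a := tendsto_nhds_unique hshift ((hL.const_mul c).add hg)
  have hL_eq : L = a / (1 - c) := by
    rw [eq_div_iff (sub_pos.2 hc1).ne']
    linarith
  exact hL_eq ▸ hL

end AffineRecurrence

namespace DependentCascade

structure IsCascade (α β : ℝ) (Q : ℕ → ℕ → ℝ) : Prop where
  one_one : Q 1 1 = α
  eq_zero : ∀ n k : ℕ, (n < k ∨ k = 0) → Q n k = 0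
  recursion : ∀ n k : ℕ, 2 ≤ n → 1 ≤ k → k ≤ n →
    Q n k = (1 - (1 - β ^ k) * α) * Q (n - 1) k + α * (1 - β ^ (k - 1)) * Q (n - 1) (k - 1)

def partialSum (Q : ℕ → ℕ → ℝ) (k N : ℕ) : ℝ := ∑ i ∈ Icc 1 N, Q i k

theorem partialSum_zero (Q : ℕ → ℕ → ℝ) (k : ℕ) : partialSum Q k 0 = 0 := by
  simp [partialSum]

theorem partialSum_add_one (Q : ℕ → ℕ → ℝ) (k N : ℕ) :
    partialSum Q k (N + 1) = partialSum Q k N + Q (N + 1) k :=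
  sum_Icc_succ_top (by omega) _

theorem monotone_partialSum {Q : ℕ → ℕ → ℝ} (hQ : ∀ n k, 0 ≤ Q n k) (k : ℕ) :
    Monotone (partialSum Q k) :=
  monotone_nat_of_le_succ fun N => by
    rw [partialSum_add_one]
    exact le_add_of_nonneg_right (hQ _ _)

def forcing (α β : ℝ) (Q : ℕ → ℕ → ℝ) (k N : ℕ) : ℝ :=
  α * (1 - β ^ (k - 1)) * partialSum Q (k - 1) N + Q 1 k

variable {α β : ℝ} {Q : ℕ → ℕ → ℝ}

namespace IsCascade

theorem rec_add_one (hQ : IsCascade α β Q) {n k : ℕ} (hn : 1 ≤ n) (hk : 1 ≤ k) :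
    Q (n + 1) k = (1 - (1 - β ^ k) * α) * Q n k + α * (1 - β ^ (k - 1)) * Q n (k - 1) := by
  by_cases hkn : k ≤ n + 1
  · exact hQ.recursion (n + 1) k (by omega) hk hkn
  · rw [hQ.eq_zero _ k (.inl (by omega)), hQ.eq_zero n k (.inl (by omega)),
      hQ.eq_zero n (k - 1) (.inl (by omega))]
    ring

theorem nonneg (hQ : IsCascade α β Q) (hα0 : 0 ≤ α) (hα1 : α ≤ 1) (hβ0 : 0 ≤ β)
    (hβ1 : β ≤ 1) (n k : ℕ) : 0 ≤ Q n k := by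
  induction n generalizing k with
  | zero => rw [hQ.eq_zero 0 k (by omega)]
  | succ n ih =>
    rcases Nat.eq_zero_or_pos k with rfl | hk
    · rw [hQ.eq_zero _ 0 (.inr rfl)]
    rcases Nat.eq_zero_or_pos n with rfl | hn
    · rcases eq_or_ne k 1 with rfl | hk1
      · rw [hQ.one_one]; exact hα0
      · rw [hQ.eq_zero 1 k (.inl (by omega))]
    have hstay : 0 ≤ 1 - (1 - β ^ k) * α := by
      nlinarith [pow_nonneg hβ0 k, pow_le_one₀ hβ0 hβ1 (n := k)]
    have hmove : 0 ≤ α * (1 - β ^ (k - 1)) :=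
      mul_nonneg hα0 (sub_nonneg.2 (pow_le_one₀ hβ0 hβ1))
    rw [hQ.rec_add_one hn hk]
    exact add_nonneg (mul_nonneg hstay (ih k)) (mul_nonneg hmove (ih _))

theorem partialSum_add_one_eq (hQ : IsCascade α β Q) {k : ℕ} (hk : 1 ≤ k) (N : ℕ) :
    partialSum Q k (N + 1) =
      (1 - (1 - β ^ k) * α) * partialSum Q k N + forcing α β Q k N := by
  induction N with
  | zero => simp [forcing, partialSum_zero, partialSum_add_one]
  | succ N ih =>
    simp only [forcing] at ih ⊢
    linear_combination partialSum_add_one Q k (N + 1) + ih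
      + hQ.rec_add_one (n := N + 1) (by omega) hk
      - (1 - (1 - β ^ k) * α) * partialSum_add_one Q k N
      - α * (1 - β ^ (k - 1)) * partialSum_add_one Q (k - 1) N

theorem forcing_one (hQ : IsCascade α β Q) : forcing α β Q 1 = fun _ => α := by
  funext N
  simp [forcing, hQ.one_one]

theorem forcing_add_one (hQ : IsCascade α β Q) {k : ℕ} (hk : 1 ≤ k) :
    forcing α β Q (k + 1) = fun N => α * (1 - β ^ k) * partialSum Q k N := by
  funext N
  simp [forcing, hQ.eq_zero 1 (k + 1) (.inl (by omega))]

theorem tendsto_partialSum (hQ : IsCascade α β Q) (hα0 : 0 < α) (hα1 : α ≤ 1)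
    (hβ0 : 0 ≤ β) (hβ1 : β < 1) {k : ℕ} (hk : 1 ≤ k) (hgm : Monotone (forcing α β Q k))
    (hg : Tendsto (forcing α β Q k) atTop (𝓝 α)) :
    Tendsto (partialSum Q k) atTop (𝓝 (1 / (1 - β ^ k))) := by
  have hβk : 0 < 1 - β ^ k := sub_pos.2 (pow_lt_one₀ hβ0 hβ1 (by omega))
  have hlim : α / (1 - (1 - (1 - β ^ k) * α)) = 1 / (1 - β ^ k) := by
    field_simp
    ring
  rw [← hlim]
  refine tendsto_div_one_sub_of_monotone_recurrence ?_ (by nlinarith) ?_ ?_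
    (hQ.partialSum_add_one_eq hk) hgm hg
  · nlinarith [pow_nonneg hβ0 k]
  · exact monotone_partialSum (hQ.nonneg hα0.le hα1 hβ0 hβ1.le) k
  · rw [partialSum_zero, hlim]
    positivity

end IsCascade

end DependentCascade

open DependentCascade in
/-- Dependent-passing model: for every `k ≥ 1`,
`lim_{n→∞} ∑_{i=1}^n Q(i,k) = 1/(1-β^k)` — the same limiting cascade size
distribution as in the independent-passing (CGM) model. -/
theorem dependent_cascade_tendsto
    (α β : ℝ) (hα0 : 0 < α) (hα1 : α < 1) (hβ0 : 0 < β) (hβ1 : β < 1)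
    (Q : ℕ → ℕ → ℝ)
    (hQ1 : Q 1 1 = α)
    (hQ0 : ∀ n k : ℕ, (n < k ∨ k = 0) → Q n k = 0)
    (hQrec : ∀ n k : ℕ, 2 ≤ n → 1 ≤ k → k ≤ n →
      Q n k = (1 - (1 - β ^ k) * α) * Q (n - 1) k
        + α * (1 - β ^ (k - 1)) * Q (n - 1) (k - 1)) :
    ∀ k : ℕ, 1 ≤ k →
      Tendsto (fun n : ℕ => ∑ i ∈ Finset.Icc 1 n, Q i k) atTop
        (nhds (1 / (1 - β ^ k))) := by
  have hQ : IsCascade α β Q := ⟨hQ1, hQ0, hQrec⟩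
  show ∀ k, 1 ≤ k → Tendsto (partialSum Q k) atTop (𝓝 (1 / (1 - β ^ k)))
  intro k hk
  induction k, hk using Nat.le_induction with
  | base =>
    refine hQ.tendsto_partialSum hα0 hα1.le hβ0.le hβ1 le_rfl ?_ ?_ <;> rw [hQ.forcing_one]
    exacts [monotone_const, tendsto_const_nhds]
  | succ k hk ih =>
    have hβk : 0 < 1 - β ^ k := sub_pos.2 (pow_lt_one₀ hβ0.le hβ1 (by omega))
    refine hQ.tendsto_partialSum hα0 hα1.le hβ0.le hβ1 (by omega) ?_ ?_ <;>
      rw [hQ.forcing_add_one hk]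
    · exact (monotone_partialSum (hQ.nonneg hα0.le hα1.le hβ0.le hβ1.le) k).const_mul
        (mul_pos hα0 hβk).le
    · convert ih.const_mul (α * (1 - β ^ k)) using 2
      field_simp
end

section
/- With P as in the cascade recurrence (β ∈ (0,1)) and any fixed k ≥ 1, P(n,k) → 0 as n → ∞. -/
/-!
Write `u n = |P n (k + 1)|`. For large `n` the recurrence gives
`u (n + 1) ≤ |β| ^ (k + 1) * u n + |(1 - β ^ k) * P n k|`, a contraction with forcing term
coming from column `k`; partial sums of such a sequence are bounded as soon as the forcing is
summable. So summability of `|P · k|` propagates from `k` to `k + 1`, starting at `k = 1` where the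
forcing coefficient `1 - β ^ 0` vanishes. Terms of a convergent series tend to `0`.
-/

open Filter Finset

theorem summable_of_le_mul_add {u b : ℕ → ℝ} {r : ℝ} (hu : ∀ n, 0 ≤ u n) (hr0 : 0 ≤ r)
    (hr1 : r < 1) (hb0 : ∀ n, 0 ≤ b n) (hb : Summable b)
    (h : ∀ n, u (n + 1) ≤ r * u n + b n) : Summable u := by
  have hmono : ∀ N, ∑ i ∈ range N, u i ≤ ∑ i ∈ range (N + 1), u i := fun N =>
    sum_le_sum_of_subset_of_nonneg (range_mono N.le_succ) fun i _ _ => hu i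
  have hbound : ∀ N, (1 - r) * ∑ i ∈ range (N + 1), u i ≤ u 0 + ∑' n, b n := by
    intro N
    have hshift :
        ∑ i ∈ range (N + 1), u i ≤ u 0 + r * ∑ i ∈ range N, u i + ∑ i ∈ range N, b i := by
      rw [sum_range_succ', add_comm, mul_sum, add_assoc, ← sum_add_distrib]
      gcongr with i
      exact h i
    have hb_le : ∑ i ∈ range N, b i ≤ ∑' n, b n := hb.sum_le_tsum _ fun i _ => hb0 i
    nlinarith [hmono N]
  refine summable_of_sum_range_le hu (c := (u 0 + ∑' n, b n) / (1 - r)) fun N => ?_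
  rw [le_div_iff₀ (by linarith), mul_comm]
  exact (mul_le_mul_of_nonneg_left (hmono N) (by linarith)).trans (hbound N)

theorem summable_of_eventually_le_mul_add {u b : ℕ → ℝ} {r : ℝ} (hu : ∀ n, 0 ≤ u n)
    (hr0 : 0 ≤ r) (hr1 : r < 1) (hb0 : ∀ n, 0 ≤ b n) (hb : Summable b)
    (h : ∀ᶠ n in atTop, u (n + 1) ≤ r * u n + b n) : Summable u := by
  obtain ⟨N, hN⟩ := eventually_atTop.mp h
  refine (summable_nat_add_iff N).mp <|
    summable_of_le_mul_add (fun n => hu _) hr0 hr1 (fun n => hb0 _)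
      ((summable_nat_add_iff N).mpr hb) fun n => ?_
  simpa only [add_right_comm] using hN (n + N) (Nat.le_add_left N n)

section Cascade

variable {β : ℝ} {P : ℕ → ℕ → ℝ}

theorem summable_abs_cascade_succ (hβ : |β| < 1)
    (hrec : ∀ n k, 1 ≤ n → k ≤ n →
      P (n + 1) (k + 1) = β ^ (k + 1) * P n (k + 1) + (1 - β ^ k) * P n k)
    {k : ℕ} (hk : Summable fun n => |(1 - β ^ k) * P n k|) :
    Summable fun n => |P n (k + 1)| := by
  refine summable_of_eventually_le_mul_add (r := |β| ^ (k + 1)) (fun n => abs_nonneg _)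
    (by positivity) (pow_lt_one₀ (abs_nonneg β) hβ k.succ_ne_zero) (fun n => abs_nonneg _) hk ?_
  filter_upwards [eventually_ge_atTop (max 1 k)] with n hn
  rw [hrec n k (le_of_max_le_left hn) (le_of_max_le_right hn), ← abs_pow, ← abs_mul]
  exact abs_add_le _ _

theorem summable_abs_cascade (hβ : |β| < 1)
    (hrec : ∀ n k, 1 ≤ n → k ≤ n →
      P (n + 1) (k + 1) = β ^ (k + 1) * P n (k + 1) + (1 - β ^ k) * P n k)
    {k : ℕ} (hk : 1 ≤ k) : Summable fun n => |P n k| := by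
  induction k, hk using Nat.le_induction with
  | base => exact summable_abs_cascade_succ hβ hrec (by simp)
  | succ k _ ih =>
    refine summable_abs_cascade_succ hβ hrec ?_
    simpa only [abs_mul] using ih.mul_left |1 - β ^ k|

end Cascade

theorem cascade_P_tendsto_zero_general
    (β : ℝ) (hβ0 : 0 < β) (hβ1 : β < 1)
    (P : ℕ → ℕ → ℝ)
    (hPrec : ∀ n k : ℕ, 2 ≤ n → 1 ≤ k → k ≤ n →
      P n k = β ^ k * P (n - 1) k + (1 - β ^ (k - 1)) * P (n - 1) (k - 1)) :
    ∀ k : ℕ, 1 ≤ k → Tendsto (fun n : ℕ => P n k) atTop (nhds 0) := by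
  intro k hk
  have hβ : |β| < 1 := abs_lt.mpr ⟨by linarith, hβ1⟩
  have hrec : ∀ n k, 1 ≤ n → k ≤ n →
      P (n + 1) (k + 1) = β ^ (k + 1) * P n (k + 1) + (1 - β ^ k) * P n k :=
    fun n k hn hkn => by simpa using hPrec (n + 1) (k + 1) (by omega) (by omega) (by omega)
  exact (tendsto_zero_iff_abs_tendsto_zero _).mpr
    (summable_abs_cascade hβ hrec hk).tendsto_atTop_zero

/-- For fixed `k ≥ 1`, `P(n,k) → 0` as `n → ∞`. -/
theorem cascade_P_tendsto_zero
    (β : ℝ) (hβ0 : 0 < β) (hβ1 : β < 1)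
    (P : ℕ → ℕ → ℝ)
    (hP1 : P 1 1 = 1)
    (hP0 : ∀ n k : ℕ, (n < k ∨ k = 0) → P n k = 0)
    (hPrec : ∀ n k : ℕ, 2 ≤ n → 1 ≤ k → k ≤ n →
      P n k = β ^ k * P (n - 1) k + (1 - β ^ (k - 1)) * P (n - 1) (k - 1)) :
    ∀ k : ℕ, 1 ≤ k → Tendsto (fun n : ℕ => P n k) atTop (nhds 0) :=
  cascade_P_tendsto_zero_general β hβ0 hβ1 P hPrec
end
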